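/- For k ≥ 2, let G_k be the graph with vertex set X_k ∪ Y_k ∪ Z_{k+1} ∪ {w}, where X_k = {x_1,…,x_k} and Y_k = {y_1,…,y_k} are independent sets, Z_{k+1} = {z_1,…,z_{k+1}} induces a complete graph K_{k+1}, the vertex w is adjacent to every vertex of X_k ∪ Y_k, the vertex z_2 is adjacent to y_2,…,y_k, and z_1 is adjacent to y_1 (and these are all edges). Then gp(G_k) = 2k and gp(G_k − z_2) = 3k − 2. -/

import Mathlib

/-!
The vertex `w` is the centre of a star whose leaves have `w` as their only neighbour: the
vertices of `X_k` in `G_k`, and those of `X_k` and `y_2, …, y_k` in `G_k − z_2`. Geodesics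
leaving a leaf pass through `w`, so if `w` or a leaf lies in a general position set `S`, no vertex
of `S` off the star lies on a geodesic from `w` to another vertex of `S`; and if `w ∈ S`, at most
one leaf is in `S`. Off the star the vertices fall into few chains of this geodesic order from `w`:
`{y_1, z_1}`, `{y_2, z_2, z_3}` and `{y_i, z_{i+1}}` (`i ≥ 3`) in `G_k`, so `S` has at most `k`
vertices there; `{y_1, z_1, z_3}` and the singletons `{z_j}` (`j ≥ 4`) in `G_k − z_2`, so at most
`k − 1`. If neither `w` nor a leaf is in `S`, then `S` lies off the star, which has `k + 1` vertices
in `G_k − z_2`, and in `G_k` misses one of `y_1, z_1, z_2`, a geodesic in this order. The bounds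
are attained by `X_k ∪ Y_k` and by `X_k ∪ {y_2, …, y_k} ∪ {z_3, …, z_{k+1}}`.
-/

open SimpleGraph

/-- `S` is a *general position set* of `G`: no three distinct vertices of `S`
lie on a common shortest path (geodesic) of `G`. -/
def IsGPSet {V : Type*} (G : SimpleGraph V) (S : Set V) : Prop :=
  ∀ ⦃u v w : V⦄, u ∈ S → v ∈ S → w ∈ S → u ≠ v → u ≠ w → v ≠ w →
    ∀ p : G.Walk u v, p.IsPath → p.length = G.dist u v → w ∉ p.support

/-- The *general position number* of `G`: the maximum cardinality of a
general position set. -/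
noncomputable def gpNum {V : Type*} [Fintype V] (G : SimpleGraph V) : ℕ :=
  sSup {n : ℕ | ∃ S : Finset V, IsGPSet G ↑S ∧ S.card = n}

/-- The vertex-deleted subgraph `G - x`, induced on `V(G) \ {x}`. -/
def delVert {V : Type*} (G : SimpleGraph V) (x : V) : SimpleGraph {y : V // y ≠ x} :=
  G.comap Subtype.val

/-- The graph `G_k`: vertices are `x_i = Sum.inl (Sum.inl i)` and
`y_i = Sum.inl (Sum.inr i)` for `i : Fin k` (with `x_j, y_j` corresponding to
`i = j - 1`), `z_j = Sum.inr (Sum.inl (j-1))` for `j ∈ [k+1]`, and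
`w = Sum.inr (Sum.inr ())`.  The vertex `w` is adjacent to every vertex of
`X_k ∪ Y_k`, the set `Z_{k+1}` induces `K_{k+1}`, `z_2` is adjacent to
`y_2, …, y_k`, and `z_1` is adjacent to `y_1`; `X_k` and `Y_k` are independent. -/
def Gkgraph (k : ℕ) : SimpleGraph ((Fin k ⊕ Fin k) ⊕ (Fin (k + 1) ⊕ Unit)) :=
  SimpleGraph.fromRel (fun a b =>
    match a, b with
    | Sum.inr (Sum.inr _), Sum.inl _ => True
    | Sum.inr (Sum.inl _), Sum.inr (Sum.inl _) => True
    | Sum.inr (Sum.inl zi), Sum.inl (Sum.inr yj) =>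
        ((zi : ℕ) = 1 ∧ 1 ≤ (yj : ℕ)) ∨ ((zi : ℕ) = 0 ∧ (yj : ℕ) = 0)
    | _, _ => False)

open Finset

namespace SimpleGraph

variable {V : Type*} {G : SimpleGraph V} {u v p a b : V}

lemma dist_eq_two_of_adj_of_adj (hne : u ≠ v) (hnadj : ¬G.Adj u v) (hua : G.Adj u a)
    (hav : G.Adj a v) : G.dist u v = 2 := by
  have h : G.edist u v = 2 := edist_eq_two_iff.mpr ⟨hne, hnadj, a, hua, hav.symm⟩
  exact_mod_cast (hua.reachable.trans hav.reachable).coe_dist_eq_edist.trans h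

lemma dist_eq_three_of_adj_of_adj_of_adj (hne : u ≠ v) (hnadj : ¬G.Adj u v)
    (hcommon : ∀ c, G.Adj u c → ¬G.Adj c v) (hua : G.Adj u a) (hab : G.Adj a b)
    (hbv : G.Adj b v) : G.dist u v = 3 := by
  have hlt : 2 < G.edist u v := two_lt_edist_iff.mpr
    ⟨hne, hnadj, Set.eq_empty_of_forall_notMem fun c hc => hcommon c hc.1 hc.2.symm⟩
  have hle := dist_le (.cons hua (.cons hab (.cons hbv .nil)))
  have hr : G.Reachable u v := hua.reachable.trans (hab.reachable.trans hbv.reachable)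
  rw [← hr.coe_dist_eq_edist] at hlt
  simp only [Walk.length_cons, Walk.length_nil] at hle
  have : 2 < G.dist u v := by exact_mod_cast hlt
  omega

lemma dist_eq_dist_add_one_of_neighborSet_eq (hu : G.neighborSet u = {p}) (hv : v ≠ u)
    (hr : G.Reachable p v) : G.dist u v = G.dist p v + 1 := by
  have hup : G.Adj u p := by simp [← mem_neighborSet, hu]
  obtain ⟨q, hq⟩ := hr.exists_walk_length_eq_dist
  obtain ⟨r, hrl⟩ := (hup.reachable.trans hr).exists_walk_length_eq_dist
  refine le_antisymm (by simpa [hq] using dist_le (.cons hup q)) ?_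
  cases r with
  | nil => exact absurd rfl hv
  | cons h r =>
    obtain rfl : _ = p := by simpa [hu] using (mem_neighborSet ..).mpr h
    have := dist_le r
    simp only [Walk.length_cons] at hrl
    omega

end SimpleGraph

section GeneralPosition

variable {V : Type*} {G : SimpleGraph V} {S : Set V} {u v p x : V}

theorem IsGPSet.dist_add_ne (hS : IsGPSet G S) {m : V} (hu : u ∈ S) (hm : m ∈ S) (hv : v ∈ S)
    (hum : G.dist u m ≠ 0) (hmv : G.dist m v ≠ 0) : G.dist u m + G.dist m v ≠ G.dist u v := by
  intro h
  obtain ⟨hne₁, hr₁⟩ := dist_ne_zero_iff_ne_and_reachable.mp hum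
  obtain ⟨hne₂, hr₂⟩ := dist_ne_zero_iff_ne_and_reachable.mp hmv
  obtain ⟨p, hp⟩ := hr₁.exists_walk_length_eq_dist
  obtain ⟨q, hq⟩ := hr₂.exists_walk_length_eq_dist
  have huv : u ≠ v := by rintro rfl; rw [dist_self] at h; omega
  have hlen : (p.append q).length = G.dist u v := by rw [Walk.length_append]; omega
  exact hS hu hv hm huv hne₁ hne₂.symm _ ((p.append q).isPath_of_length_eq_dist hlen) hlen
    (by simp)

theorem isGPSet_of_dist_lt_add
    (h : ∀ ⦃u m v⦄, u ∈ S → m ∈ S → v ∈ S → u ≠ m → m ≠ v → u ≠ v →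
      G.dist u v < G.dist u m + G.dist m v) : IsGPSet G S := by
  classical
  intro u v m hu hv hm huv hum hvm q _ hq hmq
  have h₁ := dist_le (q.takeUntil m hmq)
  have h₂ := dist_le (q.dropUntil m hmq)
  have h₃ : (q.takeUntil m hmq).length + (q.dropUntil m hmq).length = q.length := by
    rw [← Walk.length_append, q.take_spec hmq]
  have := h hu hm hv hum hvm.symm huv
  omega

theorem IsGPSet.eq_of_adj_of_adj (hS : IsGPSet G S) (hp : p ∈ S) (hu : u ∈ S) (hv : v ∈ S)
    (hpu : G.Adj p u) (hpv : G.Adj p v) (huv : ¬G.Adj u v) : u = v := by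
  by_contra hne
  have hup : G.dist u p = 1 := dist_eq_one_iff_adj.mpr hpu.symm
  have hpv' : G.dist p v = 1 := dist_eq_one_iff_adj.mpr hpv
  refine hS.dist_add_ne hu hp hv (by omega) (by omega) ?_
  rw [hup, hpv', dist_eq_two_of_adj_of_adj hne huv hpu.symm hpv]

/-- The hypotheses `dist ≠ 0` stand for `u ≠ p`, `u ≠ v` and reachability (`dist` is `0` between
unreachable vertices). -/
def IsGeodesicAntichain (G : SimpleGraph V) (p : V) (A : Set V) : Prop :=
  ∀ ⦃u v⦄, u ∈ A → v ∈ A → G.dist p u ≠ 0 → G.dist u v ≠ 0 →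
    G.dist p u + G.dist u v ≠ G.dist p v

lemma IsGeodesicAntichain.mono {A B : Set V} (h : IsGeodesicAntichain G p B) (hAB : A ⊆ B) :
    IsGeodesicAntichain G p A :=
  fun _ _ hu hv => h (hAB hu) (hAB hv)

lemma IsGPSet.isGeodesicAntichain (hS : IsGPSet G S) (hp : p ∈ S) :
    IsGeodesicAntichain G p S :=
  fun _ _ hu hv => hS.dist_add_ne hp hu hv

lemma IsGPSet.isGeodesicAntichain_diff_leaf (hS : IsGPSet G S) (hx : x ∈ S)
    (hleaf : G.neighborSet x = {p}) : IsGeodesicAntichain G p (S \ {x}) := by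
  rintro u v ⟨hu, hux⟩ ⟨hv, hvx⟩ hpu huv h
  have hdu := dist_eq_dist_add_one_of_neighborSet_eq hleaf hux (.of_dist_ne_zero hpu)
  have hdv := dist_eq_dist_add_one_of_neighborSet_eq hleaf hvx
    (.of_dist_ne_zero (by omega : G.dist p v ≠ 0))
  exact hS.dist_add_ne hx hu hv (by omega) huv (by omega)

theorem IsGPSet.card_le_of_leaves [DecidableEq V] {S L C : Finset V} {m N : ℕ}
    (hS : IsGPSet G S) (hL : ∀ x ∈ L, G.neighborSet x = {p})
    (hC : ∀ v, v ≠ p → v ∉ L → v ∈ C)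
    (hcore : ∀ A ⊆ C, IsGeodesicAntichain G p A → #A ≤ m)
    (hbare : ∀ A ⊆ C, IsGPSet G A → #A ≤ N) (hm : m + 2 ≤ N) (hLm : #L + m ≤ N) :
    #S ≤ N := by
  have hAC : (S \ L).erase p ⊆ C := fun v hv => by
    simp only [mem_erase, mem_sdiff] at hv
    exact hC v hv.1 hv.2.2
  have hsplit := card_inter_add_card_sdiff S L
  by_cases hpS : p ∈ S
  · have hSL : #(S ∩ L) ≤ 1 := card_le_one.mpr fun x hx y hy => by
      simp only [mem_inter] at hx hy
      have hxp : G.Adj x p := by simp [← mem_neighborSet, hL x hx.2]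
      have hyp : G.Adj y p := by simp [← mem_neighborSet, hL y hy.2]
      refine hS.eq_of_adj_of_adj hpS hx.1 hy.1 hxp.symm hyp.symm fun hxy => ?_
      have : y ∈ G.neighborSet x := hxy
      rw [hL x hx.2, Set.mem_singleton_iff] at this
      subst this
      exact hyp.ne rfl
    have hA := hcore _ hAC ((hS.isGeodesicAntichain hpS).mono fun v hv => by
      simp only [coe_erase, coe_sdiff] at hv
      exact hv.1.1)
    have := pred_card_le_card_erase (s := S \ L) (a := p)
    omega
  · by_cases hx : ∃ x ∈ S, x ∈ L
    · obtain ⟨x, hxS, hxL⟩ := hx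
      have hA := hcore _ hAC ((hS.isGeodesicAntichain_diff_leaf hxS (hL x hxL)).mono
        fun v hv => by
          simp only [coe_erase, coe_sdiff, Set.mem_sdiff, Set.mem_singleton_iff] at hv ⊢
          exact ⟨hv.1.1, fun h => hv.1.2 (h ▸ hxL)⟩)
      have hSA : (S \ L).erase p = S \ L := erase_eq_of_notMem fun h => hpS (mem_sdiff.mp h).1
      have := card_le_card (inter_subset_right (s₁ := S) (s₂ := L))
      rw [hSA] at hA
      omega
    · push Not at hx
      exact hbare S (fun v hv => hC v (ne_of_mem_of_not_mem hv hpS) (hx v hv)) hS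

theorem gpNum_eq_of_forall_card_le_of_exists [Fintype V] {N : ℕ}
    (hle : ∀ S : Finset V, IsGPSet G S → #S ≤ N) (hex : ∃ S : Finset V, IsGPSet G S ∧ #S = N) :
    gpNum G = N :=
  IsGreatest.csSup_eq ⟨hex, fun _ ⟨S, hS, h⟩ => h ▸ hle S hS⟩

end GeneralPosition

open Sum

namespace Gk

variable {n : ℕ}

/- `G n` is `G_{n+2}`. As in `Gkgraph`, indices start at `0`, so `y 0` is the paper's `y_1` and
`z₁` below is its `z_2`. -/
abbrev V (n : ℕ) := (Fin (n + 2) ⊕ Fin (n + 2)) ⊕ (Fin (n + 3) ⊕ Unit)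
abbrev G (n : ℕ) : SimpleGraph (V n) := Gkgraph (n + 2)
abbrev x (i : Fin (n + 2)) : V n := inl (inl i)
abbrev y (i : Fin (n + 2)) : V n := inl (inr i)
abbrev z (j : Fin (n + 3)) : V n := inr (inl j)
abbrev w : V n := inr (inr ())

@[simp] lemma adj_w_inl (a : Fin (n + 2) ⊕ Fin (n + 2)) : (G n).Adj w (inl a) := by
  simp [Gkgraph]

@[simp] lemma adj_inl_w (a : Fin (n + 2) ⊕ Fin (n + 2)) : (G n).Adj (inl a) w := by
  simp [Gkgraph]

@[simp] lemma not_adj_inl_inl (a b : Fin (n + 2) ⊕ Fin (n + 2)) :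
    ¬(G n).Adj (inl a) (inl b) := by
  simp [Gkgraph]

@[simp] lemma adj_z_z {j j' : Fin (n + 3)} : (G n).Adj (z j) (z j') ↔ j ≠ j' := by
  simp [Gkgraph]

@[simp] lemma adj_y_z {i : Fin (n + 2)} {j : Fin (n + 3)} :
    (G n).Adj (y i) (z j) ↔ (j : ℕ) = 1 ∧ 1 ≤ (i : ℕ) ∨ (j : ℕ) = 0 ∧ (i : ℕ) = 0 := by
  simp [Gkgraph]

@[simp] lemma not_adj_x_z (i : Fin (n + 2)) (j : Fin (n + 3)) : ¬(G n).Adj (x i) (z j) := by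
  simp [Gkgraph]

@[simp] lemma not_adj_z_x (i : Fin (n + 2)) (j : Fin (n + 3)) : ¬(G n).Adj (z j) (x i) := by
  simp [Gkgraph]

@[simp] lemma not_adj_w_z (j : Fin (n + 3)) : ¬(G n).Adj w (z j) := by
  simp [Gkgraph]

lemma neighborSet_x (i : Fin (n + 2)) : (G n).neighborSet (x i) = {w} := by
  ext v
  rcases v with (_ | _) | (_ | _) <;> simp [Gkgraph]

lemma dist_inl_inl {a b : Fin (n + 2) ⊕ Fin (n + 2)} (hab : a ≠ b) :
    (G n).dist (inl a) (inl b) = 2 :=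
  dist_eq_two_of_adj_of_adj (by simpa) (by simp) (adj_inl_w a) (adj_w_inl b)

lemma dist_w_y (i : Fin (n + 2)) : (G n).dist w (y i) = 1 :=
  dist_eq_one_iff_adj.mpr (by simp)

lemma dist_z_z {j j' : Fin (n + 3)} (h : j ≠ j') : (G n).dist (z j) (z j') = 1 :=
  dist_eq_one_iff_adj.mpr (by simpa)

lemma dist_y_z_of_not_adj {i : Fin (n + 2)} {j : Fin (n + 3)} (h : ¬(G n).Adj (y i) (z j)) :
    (G n).dist (y i) (z j) = 2 := by
  have h' := h
  rw [adj_y_z] at h'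
  rcases Nat.eq_zero_or_pos (i : ℕ) with hi | hi
  · refine dist_eq_two_of_adj_of_adj (by simp) h (a := z 0) (by simp [hi]) ?_
    simp only [adj_z_z, ne_eq, Fin.ext_iff, Fin.val_zero]
    omega
  · refine dist_eq_two_of_adj_of_adj (by simp) h (a := z 1) (by simp; omega) ?_
    simp only [adj_z_z, ne_eq, Fin.ext_iff, Fin.val_one]
    omega

lemma dist_w_z (j : Fin (n + 3)) :
    (G n).dist w (z j) = if (j : ℕ) ≤ 1 then 2 else 3 := by
  split_ifs with hj
  · exact dist_eq_two_of_adj_of_adj (by simp) (by simp) (a := y ⟨j, by omega⟩)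
      (by simp) (by simp only [adj_y_z]; omega)
  · refine dist_eq_three_of_adj_of_adj_of_adj (by simp) (by simp) ?_ (a := y 0)
      (b := z 0) (by simp) (by simp) ?_
    · rintro ((_ | _) | (_ | _)) hc
      · exact not_adj_x_z _ j
      · simp only [adj_y_z]; omega
      · simp at hc
      · simp at hc
    · simp only [adj_z_z, ne_eq, Fin.ext_iff, Fin.val_zero]; omega

def leaves (n : ℕ) : Finset (V n) := univ.image x

def core (n : ℕ) : Finset (V n) := univ.image y ∪ univ.image z

/-- Its fibres `{y 0, z 0}`, `{y 1, z 1, z 2}`, `{y i, z (i + 1)}` are chains of the geodesic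
order from `w`. -/
def chainIndex : V n → ℕ
  | inl (inr i) => i
  | inr (inl j) => if (j : ℕ) ≤ 1 then j else j - 1
  | _ => 0

lemma card_le_of_isGeodesicAntichain {A : Finset (V n)} (hAC : A ⊆ core n)
    (hA : IsGeodesicAntichain (G n) w A) : #A ≤ n + 2 := by
  have hyz : ∀ i j, y i ∈ A → z j ∈ A → chainIndex (z j) ≠ i := by
    intro i j hi hj hij
    simp only [chainIndex] at hij
    have hd : (G n).dist (y i) (z j) = if (j : ℕ) ≤ 1 then 1 else 2 := by
      split_ifs at hij ⊢ with hj1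
      · exact dist_eq_one_iff_adj.mpr (by simp only [adj_y_z]; omega)
      · exact dist_y_z_of_not_adj (by simp only [adj_y_z]; omega)
    refine hA hi hj (by simp [dist_w_y]) (by rw [hd]; split_ifs <;> simp) ?_
    rw [dist_w_y, hd, dist_w_z]
    split_ifs <;> omega
  have hzz : ∀ j j' : Fin (n + 3), (j : ℕ) = 1 → (j' : ℕ) = 2 → z j ∈ A → z j' ∈ A → False := by
    intro j j' hj hj' h h'
    have hne : j ≠ j' := by simp [Fin.ext_iff]; omega
    refine hA h h' (by simp [dist_w_z, hj]) (by simp [dist_z_z hne]) ?_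
    rw [dist_w_z, dist_w_z, dist_z_z hne]
    simp [hj, hj']
  refine (card_le_card_of_injOn chainIndex (t := range (n + 2)) ?_ ?_).trans (by simp)
  · intro v hv
    have := hAC hv
    simp only [core, mem_union, mem_image, mem_univ, true_and] at this
    rcases this with ⟨i, rfl⟩ | ⟨j, rfl⟩
    · simp [chainIndex]
    · simp only [chainIndex, coe_range, Set.mem_Iio]
      split_ifs <;> omega
  · intro u hu v hv huv
    have hu' := hAC hu
    have hv' := hAC hv
    simp only [core, mem_union, mem_image, mem_univ, true_and] at hu' hv'
    rcases hu' with ⟨i, rfl⟩ | ⟨j, rfl⟩ <;> rcases hv' with ⟨i', rfl⟩ | ⟨j', rfl⟩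
    · simp_all [chainIndex, Fin.ext_iff]
    · exact absurd huv.symm (hyz i j' hu hv)
    · exact absurd huv (hyz i' j hv hu)
    · by_contra hne
      have hjj : (j : ℕ) ≠ j' := fun h => hne (by simp [Fin.ext_iff, h])
      simp only [chainIndex] at huv
      have : (j : ℕ) = 1 ∧ (j' : ℕ) = 2 ∨ (j : ℕ) = 2 ∧ (j' : ℕ) = 1 := by
        split_ifs at huv <;> omega
      rcases this with ⟨h₁, h₂⟩ | ⟨h₁, h₂⟩
      exacts [hzz j j' h₁ h₂ hu hv, hzz j' j h₂ h₁ hv hu]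

lemma card_le_of_subset_core {A : Finset (V n)} (hAC : A ⊆ core n) (hA : IsGPSet (G n) A) :
    #A ≤ 2 * (n + 2) := by
  obtain ⟨v, hv, hvA⟩ : ∃ v ∈ ({y 0, z 0, z 1} : Finset (V n)), v ∉ A := by
    by_contra! h
    have h₁ : (G n).dist (y 0) (z 0) = 1 := dist_eq_one_iff_adj.mpr (by simp)
    have h₂ : (G n).dist (z 0) (z 1) = 1 := dist_z_z (by simp)
    have h₃ : (G n).dist (y 0) (z 1) = 2 := dist_y_z_of_not_adj (by simp)
    exact hA.dist_add_ne (h (y 0) (by simp)) (h (z 0) (by simp)) (h (z 1) (by simp))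
      (by omega) (by omega) (by omega)
  have hvC : v ∈ core n := by
    simp only [mem_insert, mem_singleton] at hv
    rcases hv with rfl | rfl | rfl <;> simp [core]
  have hsub : A ⊆ (core n).erase v := fun a ha => mem_erase.mpr ⟨fun h => hvA (h ▸ ha), hAC ha⟩
  have hcore : #(core n) ≤ (n + 2) + (n + 3) :=
    (card_union_le _ _).trans (add_le_add (card_image_le.trans (by simp))
      (card_image_le.trans (by simp)))
  have := card_le_card hsub
  rw [card_erase_of_mem hvC] at this
  omega

lemma isGPSet_inl : IsGPSet (G n) ↑(univ.map .inl : Finset (V n)) := by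
  refine isGPSet_of_dist_lt_add ?_
  simp only [coe_map, coe_univ, Set.image_univ, Set.mem_range, Function.Embedding.inl_apply]
  rintro _ _ _ ⟨a, rfl⟩ ⟨b, rfl⟩ ⟨c, rfl⟩ hab hbc hac
  rw [dist_inl_inl (by simpa using hac), dist_inl_inl (by simpa using hab),
    dist_inl_inl (by simpa using hbc)]
  omega

theorem gpNum_G : gpNum (G n) = 2 * (n + 2) := by
  refine gpNum_eq_of_forall_card_le_of_exists (fun S hS => hS.card_le_of_leaves
    (L := leaves n) (C := core n) (m := n + 2) ?_ ?_ (fun _ => card_le_of_isGeodesicAntichain)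
    (fun _ => card_le_of_subset_core) (by omega) ?_) ⟨_, isGPSet_inl, by simp [two_mul]⟩
  · simp only [leaves, mem_image, mem_univ, true_and]
    rintro _ ⟨i, rfl⟩
    exact neighborSet_x i
  · rintro ((i | i) | (j | ⟨⟩)) h₁ h₂ <;> simp_all [leaves, core]
  · have : #(leaves n) ≤ n + 2 := card_image_le.trans (by simp)
    omega

abbrev z₁ : V n := z ⟨1, by omega⟩

abbrev V' (n : ℕ) := {v : V n // v ≠ z₁}
abbrev G' (n : ℕ) : SimpleGraph (V' n) := delVert (G n) z₁

@[simp] lemma adj'_iff {u v : V' n} : (G' n).Adj u v ↔ (G n).Adj u v := Iff.rfl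

abbrev w' : V' n := ⟨w, by simp⟩

lemma neighborSet'_inl {a : Fin (n + 2) ⊕ Fin (n + 2)} (ha : a ≠ inr 0)
    {h : (inl a : V n) ≠ z₁} : (G' n).neighborSet ⟨inl a, h⟩ = {w'} := by
  ext ⟨v, hv⟩
  simp only [mem_neighborSet, adj'_iff, Set.mem_singleton_iff, Subtype.mk.injEq]
  refine ⟨fun hadj => ?_, fun h => h ▸ adj_inl_w a⟩
  rcases v with (b | b) | (j | ⟨⟩)
  · exact absurd hadj (not_adj_inl_inl _ _)
  · exact absurd hadj (not_adj_inl_inl _ _)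
  · rcases a with i | i
    · exact absurd hadj.symm (not_adj_z_x _ _)
    · have hi : (i : ℕ) ≠ 0 := fun h => ha (by simp [Fin.ext_iff, h])
      have hj : (j : ℕ) ≠ 1 := fun h => hv (by simp [Fin.ext_iff, h])
      rw [adj_y_z] at hadj
      omega
  · rfl

lemma dist'_w_inl (a : Fin (n + 2) ⊕ Fin (n + 2)) {h : (inl a : V n) ≠ z₁} :
    (G' n).dist w' ⟨inl a, h⟩ = 1 :=
  dist_eq_one_iff_adj.mpr (adj_w_inl a)

lemma dist'_inl_inl {a b : Fin (n + 2) ⊕ Fin (n + 2)} (hab : a ≠ b) {ha : (inl a : V n) ≠ z₁}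
    {hb : (inl b : V n) ≠ z₁} : (G' n).dist ⟨inl a, ha⟩ ⟨inl b, hb⟩ = 2 :=
  dist_eq_two_of_adj_of_adj (by simpa) (not_adj_inl_inl a b) (a := w') (adj_inl_w a) (adj_w_inl b)

lemma dist'_z_z {j j' : Fin (n + 3)} (hjj : j ≠ j') {h : z j ≠ z₁} {h' : z j' ≠ z₁} :
    (G' n).dist ⟨z j, h⟩ ⟨z j', h'⟩ = 1 :=
  dist_eq_one_iff_adj.mpr (by simpa)

lemma dist'_y₀_z₀ {h : y 0 ≠ z₁} {h' : z 0 ≠ z₁} : (G' n).dist ⟨y 0, h⟩ ⟨z 0, h'⟩ = 1 :=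
  dist_eq_one_iff_adj.mpr (by simp)

lemma dist'_w_z₀ {h : z 0 ≠ z₁} : (G' n).dist w' ⟨z 0, h⟩ = 2 :=
  dist_eq_two_of_adj_of_adj (by simp) (by simp) (a := ⟨y 0, by simp⟩) (by simp) (by simp)

lemma dist'_y₀_z {j : Fin (n + 3)} (hj : 2 ≤ (j : ℕ)) {h : y 0 ≠ z₁} {h' : z j ≠ z₁} :
    (G' n).dist ⟨y 0, h⟩ ⟨z j, h'⟩ = 2 :=
  dist_eq_two_of_adj_of_adj (by simp) (by simp only [adj'_iff, adj_y_z]; omega)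
    (a := ⟨z 0, by simp⟩) (by simp) (by simp [Fin.ext_iff]; omega)

lemma dist'_w_z {j : Fin (n + 3)} (hj : 2 ≤ (j : ℕ)) {h : z j ≠ z₁} :
    (G' n).dist w' ⟨z j, h⟩ = 3 := by
  refine dist_eq_three_of_adj_of_adj_of_adj (by simp) (by simp) ?_ (a := ⟨y 0, by simp⟩)
    (b := ⟨z 0, by simp⟩) (by simp) (by simp) (by simp [Fin.ext_iff]; omega)
  rintro ⟨(_ | i) | (_ | _), hc⟩ hadj
  · exact not_adj_x_z _ j
  · simp only [adj'_iff, adj_y_z]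
    omega
  · exact absurd hadj (not_adj_w_z _)
  · exact absurd hadj (by simp)

lemma dist'_inl_z {a : Fin (n + 2) ⊕ Fin (n + 2)} (ha : a ≠ inr 0) {j : Fin (n + 3)}
    (hj : 2 ≤ (j : ℕ)) {h : (inl a : V n) ≠ z₁} {h' : z j ≠ z₁} :
    (G' n).dist ⟨inl a, h⟩ ⟨z j, h'⟩ = 4 := by
  have hwz := dist'_w_z hj (h := h')
  rw [dist_eq_dist_add_one_of_neighborSet_eq (neighborSet'_inl ha) (by simp)
    (.of_dist_ne_zero (by omega)), hwz]

def leaves' (n : ℕ) : Finset (V' n) := ((univ.erase (inr 0)).image inl).subtype (· ≠ z₁)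

def core' (n : ℕ) : Finset (V' n) := ({y 0, z 0} ∪ (Ici 2).image z).subtype (· ≠ z₁)

def clique' (n : ℕ) : Finset (V' n) := ((Ici 2).image z).subtype (· ≠ z₁)

lemma mem_leaves' {v : V' n} : v ∈ leaves' n ↔ ∃ a, a ≠ inr 0 ∧ v.1 = inl a := by
  simp [leaves', eq_comm]

lemma mem_clique' {v : V' n} : v ∈ clique' n ↔ ∃ j : Fin (n + 3), 2 ≤ (j : ℕ) ∧ v.1 = z j := by
  simp [clique', Fin.le_iff_val_le_val, Nat.mod_eq_of_lt, eq_comm]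

lemma mem_core' {v : V' n} :
    v ∈ core' n ↔ v.1 = y 0 ∨ v.1 = z 0 ∨ ∃ j : Fin (n + 3), 2 ≤ (j : ℕ) ∧ v.1 = z j := by
  simp [core', Fin.le_iff_val_le_val, Nat.mod_eq_of_lt, eq_comm]

def zIndex : V n → ℕ
  | inr (inl j) => j
  | _ => 0

lemma card_le_of_isGeodesicAntichain' {A : Finset (V' n)} (hAC : A ⊆ core' n)
    (hA : IsGeodesicAntichain (G' n) w' A) : #A ≤ n + 1 := by
  have hyz₀ : ⟨y 0, by simp⟩ ∈ A → ⟨z 0, by simp⟩ ∈ A → False := fun h h' =>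
    hA h h' (by simp [dist'_w_inl]) (by simp [dist'_y₀_z₀]) (by
      rw [dist'_w_inl, dist'_y₀_z₀, dist'_w_z₀])
  have hyz : ∀ (j : Fin (n + 3)) (_ : (j : ℕ) = 2) (h : z j ≠ z₁),
      ⟨y 0, by simp⟩ ∈ A → ⟨z j, h⟩ ∈ A → False :=
    fun j hj _ h h' => hA h h' (by simp [dist'_w_inl]) (by simp [dist'_y₀_z hj.ge]) (by
      rw [dist'_w_inl, dist'_y₀_z hj.ge, dist'_w_z hj.ge])
  have hzz : ∀ (j : Fin (n + 3)) (_ : (j : ℕ) = 2) (h : z j ≠ z₁),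
      ⟨z 0, by simp⟩ ∈ A → ⟨z j, h⟩ ∈ A → False :=
    fun j hj _ h h' => hA h h' (by simp [dist'_w_z₀])
      (by rw [dist'_z_z (by simp [Fin.ext_iff]; omega)]; simp) (by
      rw [dist'_w_z₀, dist'_z_z (by simp [Fin.ext_iff]; omega), dist'_w_z hj.ge])
  -- `y 0`, `z 0`, `z 2` share the index `0` (truncated subtraction); they form a chain from `w'`.
  refine (card_le_card_of_injOn (fun v => zIndex v.1 - 2) (t := range (n + 1)) ?_ ?_).trans
    (by simp)
  · rintro ⟨v, hv⟩ hvA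
    rcases mem_core'.mp (hAC hvA) with rfl | rfl | ⟨j, -, rfl⟩
    · simp [zIndex]
    · simp [zIndex]
    · simp only [zIndex, coe_range, Set.mem_Iio]
      omega
  · rintro ⟨u, hu⟩ huA ⟨v, hv⟩ hvA huv
    simp only at huv
    rcases mem_core'.mp (hAC huA) with rfl | rfl | ⟨j, hj, rfl⟩ <;>
      rcases mem_core'.mp (hAC hvA) with rfl | rfl | ⟨j', hj', rfl⟩ <;>
      simp only [zIndex, Fin.val_zero] at huv
    · rfl
    · exact (hyz₀ huA hvA).elim
    · exact (hyz j' (by omega) hv huA hvA).elim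
    · exact (hyz₀ hvA huA).elim
    · rfl
    · exact (hzz j' (by omega) hv huA hvA).elim
    · exact (hyz j (by omega) hu hvA huA).elim
    · exact (hzz j (by omega) hu hvA huA).elim
    · simp [Fin.ext_iff]
      omega

lemma dist'_of_mem_leaves'_union_clique' {u v : V' n} (hu : u ∈ leaves' n ∪ clique' n)
    (hv : v ∈ leaves' n ∪ clique' n) (huv : u ≠ v) :
    (G' n).dist u v =
      if u.1.isLeft then (if v.1.isLeft then 2 else 4) else (if v.1.isLeft then 4 else 1) := by
  obtain ⟨u, hu'⟩ := u
  obtain ⟨v, hv'⟩ := v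
  simp only [mem_union, mem_leaves', mem_clique'] at hu hv
  rcases hu with ⟨a, ha, rfl⟩ | ⟨j, hj, rfl⟩ <;> rcases hv with ⟨b, hb, rfl⟩ | ⟨j', hj', rfl⟩
  · simpa using dist'_inl_inl (by simpa using huv)
  · simpa using dist'_inl_z ha hj'
  · simpa [dist_comm] using dist'_inl_z hb hj
  · have hjj : j ≠ j' := fun h => huv (by subst h; rfl)
    simpa using dist'_z_z hjj (h := hu') (h' := hv')

lemma isGPSet_leaves'_union_clique' : IsGPSet (G' n) ↑(leaves' n ∪ clique' n) := by
  refine isGPSet_of_dist_lt_add fun u m v hu hm hv hum hmv huv => ?_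
  rw [dist'_of_mem_leaves'_union_clique' hu hv huv, dist'_of_mem_leaves'_union_clique' hu hm hum,
    dist'_of_mem_leaves'_union_clique' hm hv hmv]
  split_ifs <;> omega

lemma card_leaves' : #(leaves' n) = 2 * n + 3 := by
  rw [leaves', card_subtype, filter_true_of_mem (by simp),
    card_image_of_injective _ inl_injective, card_erase_of_mem (mem_univ _)]
  simp
  omega

lemma card_clique' : #(clique' n) = n + 1 := by
  have hz : Function.Injective (z : Fin (n + 3) → V n) := fun _ _ h => by simpa using h
  rw [clique', card_subtype, filter_true_of_mem, card_image_of_injective _ hz, Fin.card_Ici,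
    Fin.val_two]
  · omega
  · intro v hv
    obtain ⟨j, hj, rfl⟩ := mem_image.mp hv
    rw [mem_Ici, Fin.le_iff_val_le_val, Fin.val_two] at hj
    simp [Fin.ext_iff]
    omega

lemma card_core'_le : #(core' n) ≤ n + 3 :=
  calc #(core' n) ≤ #({y 0, z 0} ∪ (Ici 2).image z) := by
        rw [core', card_subtype]; exact card_filter_le _ _
    _ ≤ 2 + (n + 1) := (card_union_le _ _).trans (add_le_add card_le_two
        (card_image_le.trans (by rw [Fin.card_Ici, Fin.val_two]; omega)))
    _ = n + 3 := by ring

lemma card_leaves'_union_clique' : #(leaves' n ∪ clique' n) = 3 * (n + 2) - 2 := by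
  rw [card_union_of_disjoint, card_leaves', card_clique']
  · omega
  · refine disjoint_left.mpr fun v hl hc => ?_
    obtain ⟨a, -, ha⟩ := mem_leaves'.mp hl
    obtain ⟨j, -, hj⟩ := mem_clique'.mp hc
    simp [ha] at hj

theorem gpNum_G' : gpNum (G' n) = 3 * (n + 2) - 2 := by
  refine gpNum_eq_of_forall_card_le_of_exists (fun S hS => hS.card_le_of_leaves
    (L := leaves' n) (C := core' n) (m := n + 1) ?_ ?_ (fun _ => card_le_of_isGeodesicAntichain')
    (fun _ hAC _ => (card_le_card hAC).trans ?_) (by omega) ?_)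
    ⟨_, isGPSet_leaves'_union_clique', card_leaves'_union_clique'⟩
  · intro v hv
    obtain ⟨a, ha, hva⟩ := mem_leaves'.mp hv
    obtain ⟨v, hv'⟩ := v
    subst hva
    exact neighborSet'_inl ha
  · rintro ⟨(a | i) | (j | ⟨⟩), hv⟩ h₁ h₂ <;> simp only [mem_leaves', mem_core'] at h₂ ⊢
    · exact absurd ⟨inl a, by simp, rfl⟩ h₂
    · rcases Nat.eq_zero_or_pos (i : ℕ) with hi | hi
      · obtain rfl : i = 0 := Fin.ext hi
        exact Or.inl rfl
      · exact absurd ⟨inr i, by rintro ⟨⟩; simp at hi, rfl⟩ h₂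
    · have hj : (j : ℕ) ≠ 1 := fun h => hv (by simp [Fin.ext_iff, h])
      rcases Nat.lt_or_ge (j : ℕ) 2 with hj₂ | hj₂
      · obtain rfl : j = 0 := Fin.ext (by rw [Fin.val_zero]; omega)
        exact Or.inr (Or.inl rfl)
      · exact Or.inr (Or.inr ⟨j, hj₂, rfl⟩)
    · exact absurd rfl h₁
  · exact card_core'_le.trans (by omega)
  · rw [card_leaves']
    omega

end Gk

/-- For `k ≥ 2`, `gp(G_k) = 2k` and `gp(G_k - z_2) = 3k - 2`. -/
theorem stmt_5 (k : ℕ) (hk : 2 ≤ k) :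
    gpNum (Gkgraph k) = 2 * k ∧
    gpNum (delVert (Gkgraph k) (Sum.inr (Sum.inl ⟨1, by omega⟩))) = 3 * k - 2 := by
  obtain ⟨n, rfl⟩ : ∃ n, k = n + 2 := ⟨k - 2, by omega⟩
  exact ⟨Gk.gpNum_G, Gk.gpNum_G'⟩
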